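/- The function ρ_e(χ) := (√2/(3√π)) · (e^{-4χ²} + √(2π)·χ·e^{-2χ²}·erfc(√2·χ) − 4√π·χ·erfc(2χ)) / (√2·erfc(2χ) − e^{-2χ²}·erfc(√2·χ)) satisfies ρ_e(χ) + (4/3)χ → 0 as χ → −∞. -/

import Mathlib

/-- The complementary error function `erfc(x) = (2/√π) ∫_x^∞ e^{-t²} dt`. -/
noncomputable def erfc (x : ℝ) : ℝ :=
  2 / Real.sqrt Real.pi * ∫ t in Set.Ioi x, Real.exp (-t ^ 2)

/-- The limiting edge conditional mean diagonal overlap `ρ_e`. -/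
noncomputable def rhoEdge (χ : ℝ) : ℝ :=
  Real.sqrt 2 / (3 * Real.sqrt Real.pi) *
    ((Real.exp (-4 * χ ^ 2) +
        Real.sqrt (2 * Real.pi) * χ * Real.exp (-2 * χ ^ 2) * erfc (Real.sqrt 2 * χ) -
          4 * Real.sqrt Real.pi * χ * erfc (2 * χ)) /
      (Real.sqrt 2 * erfc (2 * χ) - Real.exp (-2 * χ ^ 2) * erfc (Real.sqrt 2 * χ)))

open Real Filter MeasureTheory Set Topology

lemma gauss_integrable : Integrable (fun t : ℝ => Real.exp (-t ^ 2)) := by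
  have := integrable_exp_neg_mul_sq (b := (1 : ℝ)) one_pos
  simpa using this

lemma tendsto_Iic_integral :
    Tendsto (fun x : ℝ => ∫ t in Iic x, Real.exp (-t ^ 2)) atBot (𝓝 0) := by
  apply tendsto_of_tendsto_of_tendsto_of_le_of_le' (g := fun _ : ℝ => (0 : ℝ))
    (h := fun x : ℝ => Real.exp x) tendsto_const_nhds Real.tendsto_exp_atBot
  · filter_upwards with x
    exact setIntegral_nonneg measurableSet_Iic fun t _ => (Real.exp_pos _).le
  · filter_upwards [eventually_le_atBot (-1 : ℝ)] with x hx
    have h1 : ∫ t in Iic x, Real.exp (-t ^ 2) ≤ ∫ t in Iic x, Real.exp t := by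
      apply setIntegral_mono_on gauss_integrable.integrableOn (integrableOn_exp_Iic x)
        measurableSet_Iic
      intro t ht
      have ht' : t ≤ -1 := le_trans ht hx
      have : -t ^ 2 ≤ t := by nlinarith
      exact Real.exp_le_exp.mpr this
    calc ∫ t in Iic x, Real.exp (-t ^ 2) ≤ ∫ t in Iic x, Real.exp t := h1
      _ = Real.exp x := integral_exp_Iic x

lemma erfc_tendsto_atBot : Tendsto erfc atBot (𝓝 2) := by
  have hπ : Real.sqrt Real.pi ≠ 0 := by positivity
  have hg : ∫ t : ℝ, Real.exp (-t ^ 2) = Real.sqrt Real.pi := by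
    have := integral_gaussian 1
    simpa using this
  have key : ∀ x : ℝ, erfc x =
      2 / Real.sqrt Real.pi * (Real.sqrt Real.pi - ∫ t in Iic x, Real.exp (-t ^ 2)) := by
    intro x
    have h := intervalIntegral.integral_Iic_add_Ioi (b := x) gauss_integrable.integrableOn
      gauss_integrable.integrableOn
    rw [hg] at h
    rw [erfc]
    congr 1
    linarith
  have h2 : Tendsto (fun x : ℝ =>
      2 / Real.sqrt Real.pi * (Real.sqrt Real.pi - ∫ t in Iic x, Real.exp (-t ^ 2)))
      atBot (𝓝 (2 / Real.sqrt Real.pi * (Real.sqrt Real.pi - 0))) :=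
    tendsto_const_nhds.mul (tendsto_const_nhds.sub tendsto_Iic_integral)
  rw [sub_zero, div_mul_cancel₀ 2 hπ] at h2
  exact h2.congr fun x => (key x).symm

lemma sq_tendsto_atTop : Tendsto (fun χ : ℝ => χ ^ 2) atBot atTop := by
  have h := (tendsto_pow_atTop (n := 2) two_ne_zero :
      Tendsto (fun x : ℝ => x ^ 2) atTop atTop).comp tendsto_neg_atBot_atTop
  exact h.congr fun χ => by simp [Function.comp]

lemma exp_neg_sq_tendsto (c : ℝ) (hc : 0 < c) :
    Tendsto (fun χ : ℝ => Real.exp (-c * χ ^ 2)) atBot (𝓝 0) := by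
  have h0 : Tendsto (fun χ : ℝ => c * χ ^ 2) atBot atTop :=
    sq_tendsto_atTop.const_mul_atTop hc
  have h2 : Tendsto (fun χ : ℝ => -c * χ ^ 2) atBot atBot :=
    (tendsto_neg_atTop_atBot.comp h0).congr fun χ => by
      simp [Function.comp, neg_mul]
  exact Real.tendsto_exp_atBot.comp h2

lemma mul_exp_tendsto : Tendsto (fun χ : ℝ => χ * Real.exp (-2 * χ ^ 2)) atBot (𝓝 0) := by
  have hxex : Tendsto (fun χ : ℝ => χ * Real.exp χ) atBot (𝓝 0) := by
    have h := (tendsto_pow_mul_exp_neg_atTop_nhds_zero 1).comp tendsto_neg_atBot_atTop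
    have h2 : Tendsto (fun χ : ℝ => -(χ * Real.exp χ)) atBot (𝓝 0) :=
      h.congr fun χ => by simp [Function.comp]
    simpa using h2.neg
  apply tendsto_of_tendsto_of_tendsto_of_le_of_le' (g := fun χ : ℝ => χ * Real.exp χ)
    (h := fun _ : ℝ => (0 : ℝ)) hxex tendsto_const_nhds
  · filter_upwards [eventually_le_atBot (-1 : ℝ)] with χ hχ
    have hle : Real.exp (-2 * χ ^ 2) ≤ Real.exp χ := by
      apply Real.exp_le_exp.mpr; nlinarith
    have hχ0 : χ ≤ 0 := le_trans hχ (by norm_num)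
    nlinarith [Real.exp_pos (-2 * χ ^ 2), Real.exp_pos χ]
  · filter_upwards [eventually_le_atBot (0 : ℝ)] with χ hχ
    have := Real.exp_pos (-2 * χ ^ 2)
    nlinarith

theorem stmt_12 :
    Filter.Tendsto (fun χ : ℝ => rhoEdge χ + (4 / 3) * χ) Filter.atBot (nhds 0) := by
  have hπ : (0 : ℝ) < Real.sqrt Real.pi := Real.sqrt_pos.mpr Real.pi_pos
  have hs2 : (0 : ℝ) < Real.sqrt 2 := Real.sqrt_pos.mpr two_pos
  have hs2sq : Real.sqrt 2 ^ 2 = 2 := Real.sq_sqrt (by norm_num)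
  have h2χ : Tendsto (fun χ : ℝ => 2 * χ) atBot atBot :=
    tendsto_id.const_mul_atBot two_pos
  have hs2χ : Tendsto (fun χ : ℝ => Real.sqrt 2 * χ) atBot atBot :=
    tendsto_id.const_mul_atBot hs2
  have he1 : Tendsto (fun χ : ℝ => erfc (2 * χ)) atBot (𝓝 2) := erfc_tendsto_atBot.comp h2χ
  have he2 : Tendsto (fun χ : ℝ => erfc (Real.sqrt 2 * χ)) atBot (𝓝 2) :=
    erfc_tendsto_atBot.comp hs2χ
  have hexp2 : Tendsto (fun χ : ℝ => Real.exp (-2 * χ ^ 2)) atBot (𝓝 0) :=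
    exp_neg_sq_tendsto 2 two_pos
  have hexp4 : Tendsto (fun χ : ℝ => Real.exp (-4 * χ ^ 2)) atBot (𝓝 0) :=
    exp_neg_sq_tendsto 4 (by norm_num)
  have hD : Tendsto (fun χ : ℝ =>
      Real.sqrt 2 * erfc (2 * χ) - Real.exp (-2 * χ ^ 2) * erfc (Real.sqrt 2 * χ))
      atBot (𝓝 (2 * Real.sqrt 2)) := by
    have h := ((tendsto_const_nhds (x := Real.sqrt 2)).mul he1).sub (hexp2.mul he2)
    have : Real.sqrt 2 * 2 - 0 * 2 = 2 * Real.sqrt 2 := by ring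
    rwa [this] at h
  have hDpos : ∀ᶠ χ in atBot, 0 <
      Real.sqrt 2 * erfc (2 * χ) - Real.exp (-2 * χ ^ 2) * erfc (Real.sqrt 2 * χ) :=
    hD.eventually (eventually_gt_nhds (by positivity))
  have hg : Tendsto (fun χ : ℝ =>
      (Real.sqrt 2 * Real.exp (-4 * χ ^ 2) -
        2 * Real.sqrt Real.pi * χ * Real.exp (-2 * χ ^ 2) * erfc (Real.sqrt 2 * χ)) /
      (3 * Real.sqrt Real.pi *
        (Real.sqrt 2 * erfc (2 * χ) - Real.exp (-2 * χ ^ 2) * erfc (Real.sqrt 2 * χ))))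
      atBot (𝓝 0) := by
    have hnum : Tendsto (fun χ : ℝ =>
        Real.sqrt 2 * Real.exp (-4 * χ ^ 2) -
          2 * Real.sqrt Real.pi * χ * Real.exp (-2 * χ ^ 2) * erfc (Real.sqrt 2 * χ))
        atBot (𝓝 (Real.sqrt 2 * 0 - 2 * Real.sqrt Real.pi * 0 * 2)) := by
      apply (tendsto_const_nhds.mul hexp4).sub
      have h := ((tendsto_const_nhds (x := 2 * Real.sqrt Real.pi)).mul mul_exp_tendsto).mul he2
      exact h.congr fun χ => by ring
    have hden : Tendsto (fun χ : ℝ => 3 * Real.sqrt Real.pi *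
        (Real.sqrt 2 * erfc (2 * χ) - Real.exp (-2 * χ ^ 2) * erfc (Real.sqrt 2 * χ)))
        atBot (𝓝 (3 * Real.sqrt Real.pi * (2 * Real.sqrt 2))) := tendsto_const_nhds.mul hD
    have hden0 : 3 * Real.sqrt Real.pi * (2 * Real.sqrt 2) ≠ 0 := by positivity
    have h := hnum.div hden hden0
    have hval : (Real.sqrt 2 * 0 - 2 * Real.sqrt Real.pi * 0 * 2) /
        (3 * Real.sqrt Real.pi * (2 * Real.sqrt 2)) = 0 := by ring
    rw [hval] at h
    exact h
  apply hg.congr'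
  filter_upwards [hDpos] with χ hχ
  have hDne : Real.sqrt 2 * erfc (2 * χ) - Real.exp (-2 * χ ^ 2) * erfc (Real.sqrt 2 * χ) ≠ 0 :=
    ne_of_gt hχ
  rw [rhoEdge]
  have h2π : Real.sqrt (2 * Real.pi) = Real.sqrt 2 * Real.sqrt Real.pi :=
    Real.sqrt_mul (by norm_num) _
  rw [h2π]
  set a := erfc (2 * χ)
  set b := erfc (Real.sqrt 2 * χ)
  set e1 := Real.exp (-4 * χ ^ 2)
  set e2 := Real.exp (-2 * χ ^ 2)
  set s := Real.sqrt 2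
  set p := Real.sqrt Real.pi
  field_simp
  linear_combination (-(p * χ * e2 * b)) * hs2sq
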